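/- For all a, b ∈ [0,1], M(a,b) ≤ M*(b - a), where M(a,b) = ((1-a)b² + (1-b)a²)/(a+b-ab) and M*(c) = 8 - (8 + (c²+8)^{3/2})/(c²+4). -/
import Mathlib


open Set

lemma rpow_three_halves (x : ℝ) (hx : 0 ≤ x) :
    x ^ ((3:ℝ)/2) = Real.sqrt (x ^ 3) := by
  rw [Real.sqrt_eq_rpow, ← Real.rpow_natCast x 3, ← Real.rpow_mul hx]
  norm_num

lemma S_nonneg (a b : ℝ) (ha0 : 0 ≤ a) (ha1 : a ≤ 1) (hb0 : 0 ≤ b) (hb1 : b ≤ 1) :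
    0 ≤ (a+b-a*b)*(16*(a*b) - (a-b)^4) + (a+b)^2*(a+b-2)^2 := by
  nlinarith [mul_nonneg ha0 hb0, mul_nonneg (sub_nonneg.2 ha1) (sub_nonneg.2 hb1),
    mul_nonneg ha0 (sub_nonneg.2 ha1), mul_nonneg hb0 (sub_nonneg.2 hb1),
    sq_nonneg (a-b), sq_nonneg (a+b-2), sq_nonneg (a+b-a*b),
    mul_nonneg (mul_nonneg ha0 hb0) (mul_nonneg (sub_nonneg.2 ha1) (sub_nonneg.2 hb1)),
    sq_nonneg ((a-b)*(a+b-2)), sq_nonneg ((a-b)*(1-a)), sq_nonneg ((a-b)*(1-b)),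
    sq_nonneg ((a-b)^2), mul_nonneg (mul_nonneg ha0 hb0) (sq_nonneg (a-b)),
    mul_nonneg (mul_nonneg (sub_nonneg.2 ha1) (sub_nonneg.2 hb1)) (sq_nonneg (a-b)),
    mul_nonneg (mul_nonneg ha0 hb0) (sq_nonneg (a+b-2))]

/-- `M(a,b) = ((1-a)b² + (1-b)a²)/(a + b - ab)` (with `M(0,0) = 0`). -/
noncomputable def Mdist (a b : ℝ) : ℝ :=
  ((1 - a) * b ^ 2 + (1 - b) * a ^ 2) / (a + b - a * b)

/-- `M*(c) = 8 - (8 + (c² + 8)^{3/2})/(c² + 4)`. -/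
noncomputable def Mstar (c : ℝ) : ℝ :=
  8 - (8 + (c ^ 2 + 8) ^ ((3:ℝ) / 2)) / (c ^ 2 + 4)

set_option maxHeartbeats 1000000 in
/-- For all `a, b ∈ [0,1]`, `M(a,b) ≤ M*(b - a)`. -/
theorem Mdist_le_Mstar (a b : ℝ) (ha : a ∈ Icc (0:ℝ) 1) (hb : b ∈ Icc (0:ℝ) 1) :
    Mdist a b ≤ Mstar (b - a) := by
  obtain ⟨ha0, ha1⟩ := ha
  obtain ⟨hb0, hb1⟩ := hb
  rw [Mdist, Mstar, rpow_three_halves _ (by positivity)]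
  set s : ℝ := Real.sqrt (((b - a) ^ 2 + 8) ^ 3) with hs
  have hs0 : 0 ≤ s := Real.sqrt_nonneg _
  have hs2 : s ^ 2 = ((b - a) ^ 2 + 8) ^ 3 := Real.sq_sqrt (by positivity)
  have hK : (0:ℝ) < (b - a) ^ 2 + 4 := by positivity
  by_cases hD : a + b - a * b ≤ 0
  · -- then a = 0 and b = 0
    have ha' : a = 0 := by nlinarith
    have hb' : b = 0 := by nlinarith
    subst ha' hb'
    have hs24 : s ≤ 24 := by nlinarith [hs2, hs0]
    have h0 : ((1 - (0:ℝ)) * 0 ^ 2 + (1 - 0) * 0 ^ 2) / (0 + 0 - 0 * 0) = 0 := by norm_num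
    rw [h0]
    have : (8 + s) / ((0 - (0:ℝ)) ^ 2 + 4) ≤ 8 := by
      rw [div_le_iff₀ (by norm_num)]
      norm_num
      linarith
    linarith
  · push_neg at hD
    set N : ℝ := (1 - a) * b ^ 2 + (1 - b) * a ^ 2 with hN
    set D : ℝ := a + b - a * b with hDdef
    have hND : N ≤ D := by
      rw [hN, hDdef]
      nlinarith [mul_nonneg ha0 hb0, mul_nonneg (sub_nonneg.2 ha1) (sub_nonneg.2 hb1),
        mul_nonneg ha0 (sub_nonneg.2 ha1), mul_nonneg hb0 (sub_nonneg.2 hb1),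
        mul_nonneg (mul_nonneg ha0 hb0) (sub_nonneg.2 ha1)]
    have h8DN : 0 ≤ 8 * D - N := by linarith
    have hR : 0 ≤ (8 * D - N) * ((b - a) ^ 2 + 4) - 8 * D := by
      nlinarith [mul_nonneg h8DN (sq_nonneg (b - a)), hD, hND]
    have hS := S_nonneg a b ha0 ha1 hb0 hb1
    have hid : ((8 * D - N) * ((b - a) ^ 2 + 4) - 8 * D) ^ 2 - (s * D) ^ 2
        = (2*a + 2*b - a*b - 2) ^ 2
          * (4 * ((a+b-a*b)*(16*(a*b) - (a-b)^4) + (a+b)^2*(a+b-2)^2)) := by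
      rw [mul_pow, hs2, hN, hDdef]
      ring
    have hQ2S : 0 ≤ (2*a + 2*b - a*b - 2) ^ 2
          * (4 * ((a+b-a*b)*(16*(a*b) - (a-b)^4) + (a+b)^2*(a+b-2)^2)) :=
      mul_nonneg (sq_nonneg _) (by linarith)
    have hsq : (s * D) ^ 2 ≤ ((8 * D - N) * ((b - a) ^ 2 + 4) - 8 * D) ^ 2 := by
      linarith [hid, hQ2S]
    have hkey : s * D ≤ (8 * D - N) * ((b - a) ^ 2 + 4) - 8 * D := by
      nlinarith [hsq, mul_nonneg hs0 hD.le, hR]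
    rw [div_le_iff₀ hD]
    have expand : (8 - (8 + s) / ((b - a) ^ 2 + 4)) * D
        = ((8 * ((b - a) ^ 2 + 4) - (8 + s)) * D) / ((b - a) ^ 2 + 4) := by
      field_simp
    rw [expand, le_div_iff₀ hK]
    linarith [hkey]
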